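/- Let σ : ℝ → ℝ⁵ be C^∞ with ⟨σ, σ⟩ = 1 and ⟨σ', σ'⟩ > 0 everywhere (derivatives with respect to ρ). Set T = √⟨σ', σ'⟩, v₂ = σ'/T, σ_{ll} = v₂'/T, assume ⟨σ + σ_{ll}, σ + σ_{ll}⟩ = 0 identically, set n = T·(σ + σ_{ll}), assume ⟨n', n'⟩ = 1 identically, and define the conformal curvature Q = −(1/2)·⟨n'', n''⟩. Let γ : ℝ → ⋀²ℝ⁵ be γ(ρ) = σ(ρ) ∧ v₂(ρ). Then for all ρ: Q = −(1/2)·⟨γ''', γ'''⟩₂ + 3·⟨σ', σ'⟩, i.e. Q = −(1/2)⟨γ''', γ'''⟩₂ + 3T². -/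

import Mathlib

open scoped ContDiff

noncomputable section

/-- The Minkowski bilinear form on `ℝ⁵₁`:
`⟨x,y⟩ = -x₀y₀ + x₁y₁ + x₂y₂ + x₃y₃ + x₄y₄`. -/
def mink5 (x y : Fin 5 → ℝ) : ℝ :=
  -(x 0 * y 0) + x 1 * y 1 + x 2 * y 2 + x 3 * y 3 + x 4 * y 4

/-- The wedge product `u ∧ v` of two vectors of `ℝ⁵`, realized as the antisymmetric
matrix of Plücker coordinates `p i j = uᵢvⱼ - uⱼvᵢ`. -/
def wedge (u v : Fin 5 → ℝ) : Fin 5 → Fin 5 → ℝ := fun i j => u i * v j - u j * v i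

/-- The signature `(-1,1,1,1,1)` of the Minkowski form. -/
def eta5 (i : Fin 5) : ℝ := if i = 0 then -1 else 1

/-- The symmetric bilinear form on `⋀²ℝ⁵₁` (in Plücker coordinates) determined by
`⟨u∧v, w∧z⟩₂ = ⟨u,w⟩⟨v,z⟩ − ⟨u,z⟩⟨v,w⟩`. -/
def mink2 (p q : Fin 5 → Fin 5 → ℝ) : ℝ :=
  (1/2) * ∑ i : Fin 5, ∑ j : Fin 5, eta5 i * eta5 j * p i j * q i j

lemma mink5_comm (x y : Fin 5 → ℝ) : mink5 x y = mink5 y x := by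
  simp only [mink5]; ring
lemma mink5_smul_left (c : ℝ) (x y : Fin 5 → ℝ) : mink5 (c • x) y = c * mink5 x y := by
  simp only [mink5, Pi.smul_apply, smul_eq_mul]; ring
lemma mink5_smul_right (c : ℝ) (x y : Fin 5 → ℝ) : mink5 x (c • y) = c * mink5 x y := by
  simp only [mink5, Pi.smul_apply, smul_eq_mul]; ring
lemma mink5_add_left (x y z : Fin 5 → ℝ) : mink5 (x + y) z = mink5 x z + mink5 y z := by
  simp only [mink5, Pi.add_apply]; ring
lemma mink5_add_right (x y z : Fin 5 → ℝ) : mink5 x (y + z) = mink5 x y + mink5 x z := by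
  simp only [mink5, Pi.add_apply]; ring

lemma mink2_wedge (u v w z : Fin 5 → ℝ) :
    mink2 (wedge u v) (wedge w z) = mink5 u w * mink5 v z - mink5 u z * mink5 v w := by
  simp [mink2, wedge, mink5, eta5, Fin.sum_univ_five]
  ring

lemma mink5_lc4 (a₁ a₂ a₃ a₄ b₁ b₂ b₃ b₄ : ℝ) (x₁ x₂ x₃ x₄ : Fin 5 → ℝ) :
    mink5 (a₁•x₁+a₂•x₂+a₃•x₃+a₄•x₄) (b₁•x₁+b₂•x₂+b₃•x₃+b₄•x₄) =
      a₁*b₁*mink5 x₁ x₁ + a₂*b₂*mink5 x₂ x₂ + a₃*b₃*mink5 x₃ x₃ + a₄*b₄*mink5 x₄ x₄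
    + (a₁*b₂+a₂*b₁)*mink5 x₁ x₂ + (a₁*b₃+a₃*b₁)*mink5 x₁ x₃ + (a₁*b₄+a₄*b₁)*mink5 x₁ x₄
    + (a₂*b₃+a₃*b₂)*mink5 x₂ x₃ + (a₂*b₄+a₄*b₂)*mink5 x₂ x₄ + (a₃*b₄+a₄*b₃)*mink5 x₃ x₄ := by
  simp only [mink5, Pi.add_apply, Pi.smul_apply, smul_eq_mul]
  ring

lemma mink5_lc (a₁ a₂ a₃ a₄ a₅ b₁ b₂ b₃ b₄ b₅ : ℝ) (x₁ x₂ x₃ x₄ x₅ : Fin 5 → ℝ) :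
    mink5 (a₁•x₁+a₂•x₂+a₃•x₃+a₄•x₄+a₅•x₅) (b₁•x₁+b₂•x₂+b₃•x₃+b₄•x₄+b₅•x₅) =
      a₁*b₁*mink5 x₁ x₁ + a₂*b₂*mink5 x₂ x₂ + a₃*b₃*mink5 x₃ x₃ + a₄*b₄*mink5 x₄ x₄ + a₅*b₅*mink5 x₅ x₅
    + (a₁*b₂+a₂*b₁)*mink5 x₁ x₂ + (a₁*b₃+a₃*b₁)*mink5 x₁ x₃ + (a₁*b₄+a₄*b₁)*mink5 x₁ x₄ + (a₁*b₅+a₅*b₁)*mink5 x₁ x₅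
    + (a₂*b₃+a₃*b₂)*mink5 x₂ x₃ + (a₂*b₄+a₄*b₂)*mink5 x₂ x₄ + (a₂*b₅+a₅*b₂)*mink5 x₂ x₅
    + (a₃*b₄+a₄*b₃)*mink5 x₃ x₄ + (a₃*b₅+a₅*b₃)*mink5 x₃ x₅ + (a₄*b₅+a₅*b₄)*mink5 x₄ x₅ := by
  simp only [mink5, Pi.add_apply, Pi.smul_apply, smul_eq_mul]
  ring

lemma mink2_lc (c₁ c₂ c₃ c₄ c₅ : ℝ) (p₁ p₂ p₃ p₄ p₅ : Fin 5 → Fin 5 → ℝ) :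
    mink2 (c₁•p₁+c₂•p₂+c₃•p₃+c₄•p₄+c₅•p₅) (c₁•p₁+c₂•p₂+c₃•p₃+c₄•p₄+c₅•p₅) =
      c₁*c₁*mink2 p₁ p₁ + c₂*c₂*mink2 p₂ p₂ + c₃*c₃*mink2 p₃ p₃ + c₄*c₄*mink2 p₄ p₄ + c₅*c₅*mink2 p₅ p₅
    + 2*c₁*c₂*mink2 p₁ p₂ + 2*c₁*c₃*mink2 p₁ p₃ + 2*c₁*c₄*mink2 p₁ p₄ + 2*c₁*c₅*mink2 p₁ p₅
    + 2*c₂*c₃*mink2 p₂ p₃ + 2*c₂*c₄*mink2 p₂ p₄ + 2*c₂*c₅*mink2 p₂ p₅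
    + 2*c₃*c₄*mink2 p₃ p₄ + 2*c₃*c₅*mink2 p₃ p₅ + 2*c₄*c₅*mink2 p₄ p₅ := by
  simp only [mink2, Fin.sum_univ_five, Pi.add_apply, Pi.smul_apply, smul_eq_mul]
  ring

lemma mink5_hasDerivAt {u v : ℝ → Fin 5 → ℝ} {u' v' : Fin 5 → ℝ} {x : ℝ}
    (hu : HasDerivAt u u' x) (hv : HasDerivAt v v' x) :
    HasDerivAt (fun y => mink5 (u y) (v y)) (mink5 u' (v x) + mink5 (u x) v') x := by
  have hui : ∀ i, HasDerivAt (fun y => u y i) (u' i) x := fun i => hasDerivAt_pi.1 hu i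
  have hvi : ∀ i, HasDerivAt (fun y => v y i) (v' i) x := fun i => hasDerivAt_pi.1 hv i
  have h := ((((((hui 0).mul (hvi 0)).neg.add ((hui 1).mul (hvi 1))).add
    ((hui 2).mul (hvi 2))).add ((hui 3).mul (hvi 3))).add ((hui 4).mul (hvi 4)))
  simp only [Pi.mul_def, Pi.add_def, Pi.neg_def] at h
  simp only [mink5]
  refine h.congr_deriv ?_
  ring

lemma wedge_hasDerivAt {u v : ℝ → Fin 5 → ℝ} {u' v' : Fin 5 → ℝ} {x : ℝ}
    (hu : HasDerivAt u u' x) (hv : HasDerivAt v v' x) :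
    HasDerivAt (fun y => wedge (u y) (v y)) (wedge u' (v x) + wedge (u x) v') x := by
  have hui : ∀ i, HasDerivAt (fun y => u y i) (u' i) x := fun i => hasDerivAt_pi.1 hu i
  have hvi : ∀ i, HasDerivAt (fun y => v y i) (v' i) x := fun i => hasDerivAt_pi.1 hv i
  rw [hasDerivAt_pi]; intro i
  rw [hasDerivAt_pi]; intro j
  have h := (((hui i).mul (hvi j)).sub ((hui j).mul (hvi i)))
  simp only [Pi.mul_def, Pi.sub_def] at h
  have h2 : HasDerivAt (fun y => wedge (u y) (v y) i j)
      (u' i * v x j + u x i * v' j - (u' j * v x i + u x j * v' i)) x := by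
    simpa only [wedge] using h
  refine h2.congr_deriv ?_
  simp only [wedge, Pi.add_apply]
  ring

lemma mink5_contDiff {u v : ℝ → Fin 5 → ℝ}
    (hu : ContDiff ℝ (∞ : WithTop ℕ∞) u) (hv : ContDiff ℝ (∞ : WithTop ℕ∞) v) :
    ContDiff ℝ (∞ : WithTop ℕ∞) (fun ρ => mink5 (u ρ) (v ρ)) := by
  have hui : ∀ i, ContDiff ℝ (∞ : WithTop ℕ∞) (fun ρ => u ρ i) := fun i => contDiff_pi.1 hu i
  have hvi : ∀ i, ContDiff ℝ (∞ : WithTop ℕ∞) (fun ρ => v ρ i) := fun i => contDiff_pi.1 hv i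
  simp only [mink5]
  exact (((((hui 0).mul (hvi 0)).neg.add ((hui 1).mul (hvi 1))).add
    ((hui 2).mul (hvi 2))).add ((hui 3).mul (hvi 3))).add ((hui 4).mul (hvi 4))

lemma cancel_pos {t m : ℝ} (ht : 0 < t) (h : t * m = 0) : m = 0 :=
  (mul_eq_zero.mp h).resolve_left ht.ne'

lemma const_hasDerivAt_zero {f : ℝ → ℝ} {c : ℝ} {f' : ℝ} {x : ℝ}
    (h : ∀ y, f y = c) (hf : HasDerivAt f f' x) : f' = 0 := by
  have h2 : HasDerivAt f 0 x := by
    have he : f = fun _ => c := funext h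
    rw [he]; exact hasDerivAt_const x c
  exact hf.unique h2


/-- **Theorem: conformal curvature from osculating circles and spheres.**
With `σ` the curve of osculating spheres parameterized by conformal arc-length `ρ`
(`⟨σ,σ⟩ = 1`, `⟨σ',σ'⟩ > 0`), `T = √⟨σ',σ'⟩`, `v₂ = σ'/T`, `σ_{ll} = v₂'/T`, geodesic
curvature vector `σ + σ_{ll}` light-like, `n = T·(σ + σ_{ll})` with `⟨n',n'⟩ = 1`, and
conformal curvature `Q = -½⟨n'',n''⟩`, the curve of osculating circles `γ = σ ∧ v₂`
satisfies `Q = -½⟨γ''',γ'''⟩₂ + 3⟨σ',σ'⟩ = -½⟨γ''',γ'''⟩₂ + 3T²`. -/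
theorem conformal_curvature_from_gamma_and_sigma
    (σ : ℝ → Fin 5 → ℝ) (hσ : ContDiff ℝ (⊤ : ℕ∞) σ)
    (h0 : ∀ ρ, mink5 (σ ρ) (σ ρ) = 1)
    (h1 : ∀ ρ, 0 < mink5 (deriv σ ρ) (deriv σ ρ))
    (T : ℝ → ℝ) (hT : ∀ ρ, T ρ = Real.sqrt (mink5 (deriv σ ρ) (deriv σ ρ)))
    (v₂ : ℝ → Fin 5 → ℝ) (hv₂ : ∀ ρ, v₂ ρ = (T ρ)⁻¹ • deriv σ ρ)
    (σll : ℝ → Fin 5 → ℝ) (hσll : ∀ ρ, σll ρ = (T ρ)⁻¹ • deriv v₂ ρ)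
    (hlight : ∀ ρ, mink5 (σ ρ + σll ρ) (σ ρ + σll ρ) = 0)
    (n : ℝ → Fin 5 → ℝ) (hn : ∀ ρ, n ρ = T ρ • (σ ρ + σll ρ))
    (hconf : ∀ ρ, mink5 (deriv n ρ) (deriv n ρ) = 1)
    (Q : ℝ → ℝ)
    (hQ : ∀ ρ, Q ρ = -(1/2) * mink5 (iteratedDeriv 2 n ρ) (iteratedDeriv 2 n ρ))
    (γ : ℝ → Fin 5 → Fin 5 → ℝ)
    (hγ : ∀ ρ, γ ρ = wedge (σ ρ) (v₂ ρ)) :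
    ∀ ρ : ℝ, Q ρ = -(1/2) * mink2 (iteratedDeriv 3 γ ρ) (iteratedDeriv 3 γ ρ)
      + 3 * mink5 (deriv σ ρ) (deriv σ ρ) := by
  -- smoothness
  have hσi : ContDiff ℝ (∞ : WithTop ℕ∞) σ := hσ.of_le (by simp)
  have hσd : ContDiff ℝ (∞ : WithTop ℕ∞) (deriv σ) := (contDiff_infty_iff_deriv.mp hσi).2
  have hσdiff : Differentiable ℝ σ := (contDiff_infty_iff_deriv.mp hσi).1
  have hTpos : ∀ ρ, 0 < T ρ := fun ρ => by rw [hT]; exact Real.sqrt_pos.2 (h1 ρ)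
  have hTne : ∀ ρ, T ρ ≠ 0 := fun ρ => (hTpos ρ).ne'
  have hT2 : ∀ ρ, T ρ * T ρ = mink5 (deriv σ ρ) (deriv σ ρ) := fun ρ => by
    rw [hT]; exact Real.mul_self_sqrt (h1 ρ).le
  have hTc : ContDiff ℝ (∞ : WithTop ℕ∞) T := by
    have hg : ContDiff ℝ (∞ : WithTop ℕ∞) (fun ρ => mink5 (deriv σ ρ) (deriv σ ρ)) :=
      mink5_contDiff hσd hσd
    rw [funext hT, contDiff_iff_contDiffAt]
    exact fun ρ => (Real.contDiffAt_sqrt (h1 ρ).ne').comp ρ hg.contDiffAt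
  have hTdiff : Differentiable ℝ T := (contDiff_infty_iff_deriv.mp hTc).1
  have hT'c : ContDiff ℝ (∞ : WithTop ℕ∞) (deriv T) := (contDiff_infty_iff_deriv.mp hTc).2
  have hT'diff : Differentiable ℝ (deriv T) := (contDiff_infty_iff_deriv.mp hT'c).1
  have hTinv : ContDiff ℝ (∞ : WithTop ℕ∞) (fun ρ => (T ρ)⁻¹) := hTc.inv hTne
  have hv₂c : ContDiff ℝ (∞ : WithTop ℕ∞) v₂ := by
    rw [funext hv₂]; exact hTinv.smul hσd
  have hv₂diff : Differentiable ℝ v₂ := (contDiff_infty_iff_deriv.mp hv₂c).1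
  have hv₂d : ContDiff ℝ (∞ : WithTop ℕ∞) (deriv v₂) := (contDiff_infty_iff_deriv.mp hv₂c).2
  have hσllc : ContDiff ℝ (∞ : WithTop ℕ∞) σll := by
    rw [funext hσll]; exact hTinv.smul hv₂d
  have hσlldiff : Differentiable ℝ σll := (contDiff_infty_iff_deriv.mp hσllc).1
  have hwc : ContDiff ℝ (∞ : WithTop ℕ∞) (deriv σll) := (contDiff_infty_iff_deriv.mp hσllc).2
  have hwdiff : Differentiable ℝ (deriv σll) := (contDiff_infty_iff_deriv.mp hwc).1
  -- derivative facts
  set w : ℝ → Fin 5 → ℝ := deriv σll with hwdef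
  set w2 : ℝ → Fin 5 → ℝ := deriv w with hw2def
  set T' : ℝ → ℝ := deriv T with hT'def
  set T'' : ℝ → ℝ := deriv T' with hT''def
  have hσD : ∀ ρ, HasDerivAt σ (T ρ • v₂ ρ) ρ := by
    intro ρ
    have e : T ρ • v₂ ρ = deriv σ ρ := by
      rw [hv₂, smul_smul, mul_inv_cancel₀ (hTne ρ), one_smul]
    rw [e]; exact (hσdiff ρ).hasDerivAt
  have hv₂D : ∀ ρ, HasDerivAt v₂ (T ρ • σll ρ) ρ := by
    intro ρ
    have e : T ρ • σll ρ = deriv v₂ ρ := by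
      rw [hσll, smul_smul, mul_inv_cancel₀ (hTne ρ), one_smul]
    rw [e]; exact (hv₂diff ρ).hasDerivAt
  have hσllD : ∀ ρ, HasDerivAt σll (w ρ) ρ := fun ρ => (hσlldiff ρ).hasDerivAt
  have hwD : ∀ ρ, HasDerivAt w (w2 ρ) ρ := fun ρ => (hwdiff ρ).hasDerivAt
  have hTD : ∀ ρ, HasDerivAt T (T' ρ) ρ := fun ρ => (hTdiff ρ).hasDerivAt
  have hT'D : ∀ ρ, HasDerivAt T' (T'' ρ) ρ := fun ρ => (hT'diff ρ).hasDerivAt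
  -- Gram identities
  have gσv : ∀ ρ, mink5 (σ ρ) (v₂ ρ) = 0 := by
    intro ρ
    have h := const_hasDerivAt_zero h0 (mink5_hasDerivAt (hσD ρ) (hσD ρ))
    rw [mink5_smul_left, mink5_smul_right, mink5_comm (v₂ ρ) (σ ρ)] at h
    exact cancel_pos (hTpos ρ) (by linarith)
  have gvv : ∀ ρ, mink5 (v₂ ρ) (v₂ ρ) = 1 := by
    intro ρ
    rw [hv₂, mink5_smul_left, mink5_smul_right, ← hT2 ρ]
    field_simp [hTne ρ]
  have gvσll : ∀ ρ, mink5 (v₂ ρ) (σll ρ) = 0 := by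
    intro ρ
    have h := const_hasDerivAt_zero gvv (mink5_hasDerivAt (hv₂D ρ) (hv₂D ρ))
    rw [mink5_smul_left, mink5_smul_right, mink5_comm (σll ρ) (v₂ ρ)] at h
    exact cancel_pos (hTpos ρ) (by linarith)
  have gσσll : ∀ ρ, mink5 (σ ρ) (σll ρ) = -1 := by
    intro ρ
    have h := const_hasDerivAt_zero gσv (mink5_hasDerivAt (hσD ρ) (hv₂D ρ))
    rw [mink5_smul_left, mink5_smul_right, gvv ρ] at h
    have h2 : T ρ * (1 + mink5 (σ ρ) (σll ρ)) = 0 := by linear_combination h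
    have := cancel_pos (hTpos ρ) h2
    linarith
  have gσllσll : ∀ ρ, mink5 (σll ρ) (σll ρ) = 1 := by
    intro ρ
    have h := hlight ρ
    rw [mink5_add_left, mink5_add_right, mink5_add_right, mink5_comm (σll ρ) (σ ρ),
      h0 ρ, gσσll ρ] at h
    linarith
  have gσw : ∀ ρ, mink5 (σ ρ) (w ρ) = 0 := by
    intro ρ
    have h := const_hasDerivAt_zero gσσll (mink5_hasDerivAt (hσD ρ) (hσllD ρ))
    rw [mink5_smul_left, gvσll ρ] at h
    linarith
  have gσllw : ∀ ρ, mink5 (σll ρ) (w ρ) = 0 := by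
    intro ρ
    have h := const_hasDerivAt_zero gσllσll (mink5_hasDerivAt (hσllD ρ) (hσllD ρ))
    rw [mink5_comm (w ρ) (σll ρ)] at h
    linarith
  have gvw : ∀ ρ, mink5 (v₂ ρ) (w ρ) = -(T ρ) := by
    intro ρ
    have h := const_hasDerivAt_zero gvσll (mink5_hasDerivAt (hv₂D ρ) (hσllD ρ))
    rw [mink5_smul_left, gσllσll ρ] at h
    linarith
  have gσw2 : ∀ ρ, mink5 (σ ρ) (w2 ρ) = T ρ * T ρ := by
    intro ρ
    have h := const_hasDerivAt_zero gσw (mink5_hasDerivAt (hσD ρ) (hwD ρ))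
    rw [mink5_smul_left, gvw ρ] at h
    linear_combination h
  have gvw2 : ∀ ρ, mink5 (v₂ ρ) (w2 ρ) = -(T' ρ) := by
    intro ρ
    have hfun : ∀ y, mink5 (v₂ y) (w y) + T y = 0 := fun y => by rw [gvw y]; ring
    have h := const_hasDerivAt_zero hfun
      ((mink5_hasDerivAt (hv₂D ρ) (hwD ρ)).add (hTD ρ))
    rw [mink5_smul_left, gσllw ρ] at h
    linarith
  have gσllw2 : ∀ ρ, mink5 (σll ρ) (w2 ρ) = -(mink5 (w ρ) (w ρ)) := by
    intro ρ
    have h := const_hasDerivAt_zero gσllw (mink5_hasDerivAt (hσllD ρ) (hwD ρ))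
    linarith
  -- first derivative of n and key relation
  have hdn : ∀ ρ, deriv n ρ =
      T' ρ • σ ρ + (T ρ * T ρ) • v₂ ρ + T' ρ • σll ρ + T ρ • w ρ := by
    intro ρ
    have H : HasDerivAt n
        (T ρ • (T ρ • v₂ ρ + w ρ) + T' ρ • (σ ρ + σll ρ)) ρ := by
      rw [funext hn]
      exact (hTD ρ).smul ((hσD ρ).add (hσllD ρ))
    rw [H.deriv]
    funext i
    simp only [Pi.add_apply, Pi.smul_apply, smul_eq_mul]
    ring
  have hrel : ∀ ρ, (T ρ * T ρ) * mink5 (w ρ) (w ρ) - (T ρ)^4 = 1 := by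
    intro ρ
    have h := hconf ρ
    rw [hdn ρ, mink5_lc4] at h
    rw [h0 ρ, gvv ρ, gσllσll ρ, gσv ρ, gσσll ρ, gvσll ρ, gσw ρ, gvw ρ, gσllw ρ] at h
    linear_combination h
  -- second derivative of n
  have hn2 : ∀ ρ, iteratedDeriv 2 n ρ =
      T'' ρ • σ ρ + (3*(T ρ * T' ρ)) • v₂ ρ + (T'' ρ + (T ρ)^3) • σll ρ
        + (2*T' ρ) • w ρ + T ρ • w2 ρ := by
    intro ρ
    have e : iteratedDeriv 2 n = deriv (deriv n) := by
      rw [iteratedDeriv_succ, iteratedDeriv_one]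
    rw [e, funext hdn]
    have h1 := (hT'D ρ).smul (hσD ρ)
    have h2 := ((hTD ρ).mul (hTD ρ)).smul (hv₂D ρ)
    have h3 := (hT'D ρ).smul (hσllD ρ)
    have h4 := (hTD ρ).smul (hwD ρ)
    have H := ((h1.add h2).add h3).add h4
    refine H.deriv.trans ?_
    funext i
    simp only [Pi.add_apply, Pi.smul_apply, smul_eq_mul, Pi.mul_apply]
    ring
  -- derivatives of γ
  have hγ1 : ∀ ρ, deriv γ ρ = T ρ • wedge (σ ρ) (σll ρ) := by
    intro ρ
    rw [funext hγ]
    have H := wedge_hasDerivAt (hσD ρ) (hv₂D ρ)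
    refine H.deriv.trans ?_
    funext i j
    simp only [wedge, Pi.add_apply, Pi.smul_apply, smul_eq_mul]
    ring
  have hγ2 : ∀ ρ, deriv (deriv γ) ρ =
      T' ρ • wedge (σ ρ) (σll ρ) + (T ρ * T ρ) • wedge (v₂ ρ) (σll ρ)
        + T ρ • wedge (σ ρ) (w ρ) := by
    intro ρ
    rw [funext hγ1]
    have H := (hTD ρ).smul (wedge_hasDerivAt (hσD ρ) (hσllD ρ))
    refine H.deriv.trans ?_
    funext i j
    simp only [wedge, Pi.add_apply, Pi.smul_apply, smul_eq_mul]
    ring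
  have hγ3 : ∀ ρ, iteratedDeriv 3 γ ρ =
      T'' ρ • wedge (σ ρ) (σll ρ) + (3*(T ρ * T' ρ)) • wedge (v₂ ρ) (σll ρ)
        + (2*T' ρ) • wedge (σ ρ) (w ρ) + (2*(T ρ * T ρ)) • wedge (v₂ ρ) (w ρ)
        + T ρ • wedge (σ ρ) (w2 ρ) := by
    intro ρ
    have e : iteratedDeriv 3 γ = deriv (deriv (deriv γ)) := by
      rw [iteratedDeriv_succ, iteratedDeriv_succ, iteratedDeriv_one]
    rw [e, funext hγ2]
    have h1 := (hT'D ρ).smul (wedge_hasDerivAt (hσD ρ) (hσllD ρ))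
    have h2 := ((hTD ρ).mul (hTD ρ)).smul (wedge_hasDerivAt (hv₂D ρ) (hσllD ρ))
    have h3 := (hTD ρ).smul (wedge_hasDerivAt (hσD ρ) (hwD ρ))
    have H := (h1.add h2).add h3
    refine H.deriv.trans ?_
    funext i j
    simp only [wedge, Pi.add_apply, Pi.smul_apply, smul_eq_mul, Pi.mul_apply]
    ring
  -- conclusion
  intro ρ
  have hflip : mink5 (w2 ρ) (w ρ) = mink5 (w ρ) (w2 ρ) := mink5_comm _ _
  have gvσ : mink5 (v₂ ρ) (σ ρ) = 0 := (mink5_comm _ _).trans (gσv ρ)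
  have gσllσ : mink5 (σll ρ) (σ ρ) = -1 := (mink5_comm _ _).trans (gσσll ρ)
  have gσllv : mink5 (σll ρ) (v₂ ρ) = 0 := (mink5_comm _ _).trans (gvσll ρ)
  have gwσ : mink5 (w ρ) (σ ρ) = 0 := (mink5_comm _ _).trans (gσw ρ)
  have gwv : mink5 (w ρ) (v₂ ρ) = -(T ρ) := (mink5_comm _ _).trans (gvw ρ)
  have gwσll : mink5 (w ρ) (σll ρ) = 0 := (mink5_comm _ _).trans (gσllw ρ)
  have gw2σ : mink5 (w2 ρ) (σ ρ) = T ρ * T ρ := (mink5_comm _ _).trans (gσw2 ρ)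
  have gw2v : mink5 (w2 ρ) (v₂ ρ) = -(T' ρ) := (mink5_comm _ _).trans (gvw2 ρ)
  have gw2σll : mink5 (w2 ρ) (σll ρ) = -(mink5 (w ρ) (w ρ)) :=
    (mink5_comm _ _).trans (gσllw2 ρ)
  rw [hQ ρ, hn2 ρ, hγ3 ρ, mink5_lc, mink2_lc]
  simp only [mink2_wedge]
  rw [h0 ρ]
  simp only [gσv ρ, gvv ρ, gvσll ρ, gσσll ρ, gσllσll ρ, gσw ρ, gσllw ρ, gvw ρ,
    gσw2 ρ, gvw2 ρ, gσllw2 ρ, gvσ, gσllσ, gσllv, gwσ, gwv, gwσll, gw2σ, gw2v, gw2σll, hflip,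
    h0 ρ]
  rw [← hT2 ρ]
  linear_combination (3*(T ρ * T ρ)) * (hrel ρ)
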